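/- arXiv:1808.10400 — 5 statements merged into one kernel-verified Lean document; each statement's English description precedes it below -/
import Mathlib

section
/- Let M ≥ 1 and let U be an M×M complex matrix satisfying Uᴴ·U = c·I for some real c > 0. Suppose the sequences x_0, …, x_{M−1} : ℤ → ℂ, each with finite support, form a complementary set, i.e. for every nonzero integer k, ∑_{m=0}^{M−1} ∑_{n∈ℤ} x_m(n)·conj(x_m(n+k)) = 0. Define y_p(n) = ∑_{q=0}^{M−1} U_{p,q}·x_q(n) for p = 0,…,M−1. Then y_0, …, y_{M−1} also form a complementary set: for every nonzero integer k, ∑_{m=0}^{M−1} ∑_{n∈ℤ} y_m(n)·conj(y_m(n+k)) = 0. -/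
open Matrix

/-- A wide-sense unitary transform of a complementary set of
finitely supported sequences is again a complementary set. -/
theorem unitary_transform_of_complementary_set
    (M : ℕ) (hM : 1 ≤ M)
    (U : Matrix (Fin M) (Fin M) ℂ) (c : ℝ) (hc : 0 < c)
    (hU : U.conjTranspose * U = (c : ℂ) • (1 : Matrix (Fin M) (Fin M) ℂ))
    (x : Fin M → ℤ → ℂ)
    (hxfin : ∀ m, (Function.support (x m)).Finite)
    (hcomp : ∀ k : ℤ, k ≠ 0 →
      ∑ m : Fin M, ∑ᶠ n : ℤ, x m n * (starRingEnd ℂ) (x m (n + k)) = 0)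
    (y : Fin M → ℤ → ℂ)
    (hy : ∀ p n, y p n = ∑ q : Fin M, U p q * x q n) :
    ∀ k : ℤ, k ≠ 0 →
      ∑ m : Fin M, ∑ᶠ n : ℤ, y m n * (starRingEnd ℂ) (y m (n + k)) = 0 := by
  intro k hk
  have hfin : (⋃ q, Function.support (x q)).Finite := Set.finite_iUnion hxfin
  set s : Finset ℤ := hfin.toFinset with hs
  have hxs : ∀ q n, n ∉ s → x q n = 0 := by
    intro q n hn
    by_contra h
    exact hn (hfin.mem_toFinset.2 (Set.mem_iUnion.2 ⟨q, h⟩))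
  have hys : ∀ m n, n ∉ s → y m n = 0 := by
    intro m n hn
    rw [hy]
    exact Finset.sum_eq_zero fun q _ => by rw [hxs q n hn, mul_zero]
  -- orthogonality of rows
  have hortho : ∀ q r : Fin M, ∑ m : Fin M, U m q * (starRingEnd ℂ) (U m r)
      = if q = r then (c : ℂ) else 0 := by
    intro q r
    have h := congrFun (congrFun hU r) q
    simp only [Matrix.mul_apply, Matrix.conjTranspose_apply, Matrix.smul_apply,
      Matrix.one_apply, smul_eq_mul] at h
    calc ∑ m : Fin M, U m q * (starRingEnd ℂ) (U m r)
        = ∑ m : Fin M, star (U m r) * U m q := by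
          refine Finset.sum_congr rfl fun m _ => ?_; ring_nf; rfl
      _ = if q = r then (c : ℂ) else 0 := by
          rw [h]; by_cases hqr : q = r <;> simp [hqr, eq_comm]
  -- rewrite finsums as finite sums over s
  have hyfin : ∀ m : Fin M,
      (∑ᶠ n : ℤ, y m n * (starRingEnd ℂ) (y m (n + k)))
      = ∑ n ∈ s, y m n * (starRingEnd ℂ) (y m (n + k)) := by
    intro m
    refine finsum_eq_finset_sum_of_support_subset _ ?_
    intro n hn
    by_contra hns
    rw [Function.mem_support] at hn
    exact hn (by rw [hys m n hns, zero_mul])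
  have hxfin' : ∀ q : Fin M,
      (∑ᶠ n : ℤ, x q n * (starRingEnd ℂ) (x q (n + k)))
      = ∑ n ∈ s, x q n * (starRingEnd ℂ) (x q (n + k)) := by
    intro q
    refine finsum_eq_finset_sum_of_support_subset _ ?_
    intro n hn
    by_contra hns
    rw [Function.mem_support] at hn
    exact hn (by rw [hxs q n hns, zero_mul])
  calc ∑ m : Fin M, ∑ᶠ n : ℤ, y m n * (starRingEnd ℂ) (y m (n + k))
      = ∑ m : Fin M, ∑ n ∈ s, y m n * (starRingEnd ℂ) (y m (n + k)) := by
        exact Finset.sum_congr rfl fun m _ => hyfin m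
    _ = ∑ n ∈ s, ∑ q : Fin M, ∑ r : Fin M,
          (∑ m : Fin M, U m q * (starRingEnd ℂ) (U m r))
            * (x q n * (starRingEnd ℂ) (x r (n + k))) := by
        rw [Finset.sum_comm]
        refine Finset.sum_congr rfl fun n _ => ?_
        calc ∑ m : Fin M, y m n * (starRingEnd ℂ) (y m (n + k))
            = ∑ m : Fin M, ∑ q : Fin M, ∑ r : Fin M,
                (U m q * (starRingEnd ℂ) (U m r))
                  * (x q n * (starRingEnd ℂ) (x r (n + k))) := by
              refine Finset.sum_congr rfl fun m _ => ?_
              rw [hy, hy, map_sum, Finset.sum_mul_sum]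
              refine Finset.sum_congr rfl fun q _ =>
                Finset.sum_congr rfl fun r _ => ?_
              rw [_root_.map_mul]; ring
          _ = ∑ q : Fin M, ∑ m : Fin M, ∑ r : Fin M,
                (U m q * (starRingEnd ℂ) (U m r))
                  * (x q n * (starRingEnd ℂ) (x r (n + k))) := Finset.sum_comm
          _ = ∑ q : Fin M, ∑ r : Fin M, ∑ m : Fin M,
                (U m q * (starRingEnd ℂ) (U m r))
                  * (x q n * (starRingEnd ℂ) (x r (n + k))) :=
              Finset.sum_congr rfl fun q _ => Finset.sum_comm
          _ = ∑ q : Fin M, ∑ r : Fin M,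
                (∑ m : Fin M, U m q * (starRingEnd ℂ) (U m r))
                  * (x q n * (starRingEnd ℂ) (x r (n + k))) := by
              simp [Finset.sum_mul]
    _ = ∑ n ∈ s, ∑ q : Fin M, (c : ℂ) * (x q n * (starRingEnd ℂ) (x q (n + k))) := by
        refine Finset.sum_congr rfl fun n _ => Finset.sum_congr rfl fun q _ => ?_
        rw [Finset.sum_congr rfl fun r _ => by rw [hortho q r]]
        simp [Finset.sum_ite_eq, eq_comm]
    _ = (c : ℂ) * ∑ q : Fin M, ∑ᶠ n : ℤ, x q n * (starRingEnd ℂ) (x q (n + k)) := by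
        rw [Finset.mul_sum, Finset.sum_comm]
        exact Finset.sum_congr rfl fun q _ => by rw [hxfin' q, Finset.mul_sum]
    _ = 0 := by rw [hcomp k hk, mul_zero]
end

section
/- (Proposition 1, recursive paraunitary algorithm.) Let M ≥ 1, K ≥ 0, and let U⁽⁰⁾, U⁽¹⁾, …, U⁽ᴷ⁾ be M×M complex matrices each satisfying (U⁽ᵏ⁾)ᴴ·U⁽ᵏ⁾ = c_k·I with c_k > 0 real, and let D_m⁽ᵏ⁾ (k = 1,…,K; m = 0,…,M−1) be nonnegative integers. Fix r ∈ {0,…,M−1} and define recursively the families of sequences x_{k,m}^{(r)} : ℤ → ℂ (m = 0,…,M−1) by: x_{0,m}^{(r)}(n) = U⁽⁰⁾_{m,r} if n = 0 and 0 otherwise; and for k = 1,…,K, x_{k,m}^{(r)}(n) = ∑_{q=0}^{M−1} U⁽ᵏ⁾_{m,q} · x_{k−1,q}^{(r)}(n − D_q⁽ᵏ⁾). Then the M sequences x_{K,0}^{(r)}, …, x_{K,M−1}^{(r)} form a complementary set: for every nonzero integer k, ∑_{m=0}^{M−1} ∑_{n∈ℤ} x_{K,m}^{(r)}(n)·conj(x_{K,m}^{(r)}(n+k))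 = 0. -/
/-!
Each step of the recursion preserves the sum of the aperiodic autocorrelations up to the factor
`c`: a delay shifts every sequence, which leaves its own autocorrelation unchanged, and at each
time `n` the mixing step multiplies the vectors `(y_q(n))_q` and `(y_q(n + k))_q` by `U`, whose
columns are orthogonal of squared norm `c`, so their inner product is multiplied by `c`. The
starting family is supported at `n = 0`, so its autocorrelations vanish at every nonzero lag.
-/

open Function Matrix

namespace ComplementarySet

variable {ι κ : Type*} [Fintype ι]

noncomputable def autocorrSum (y : ι → ℤ → ℂ) (k : ℤ) : ℂ :=
  ∑ m, ∑ᶠ n : ℤ, y m n * (starRingEnd ℂ) (y m (n + k))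

def IsComplementarySet (y : ι → ℤ → ℂ) : Prop :=
  (∀ m, (y m).HasFiniteSupport) ∧ ∀ k : ℤ, k ≠ 0 → autocorrSum y k = 0

def delaySeqs (d : ι → ℤ) (y : ι → ℤ → ℂ) : ι → ℤ → ℂ :=
  fun q n => y q (n - d q)

def mixSeqs (U : Matrix κ ι ℂ) (y : ι → ℤ → ℂ) : κ → ℤ → ℂ :=
  fun m n => ∑ q, U m q * y q n

theorem autocorrSum_delaySeqs (d : ι → ℤ) (y : ι → ℤ → ℂ) (k : ℤ) :
    autocorrSum (delaySeqs d y) k = autocorrSum y k := by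
  refine Finset.sum_congr rfl fun q _ => ?_
  rw [← finsum_comp_equiv (Equiv.addRight (d q))]
  refine finsum_congr fun n => ?_
  simp only [delaySeqs, Equiv.coe_addRight, add_sub_cancel_right, add_right_comm n (d q) k]

theorem autocorrSum_eq_finsum_dotProduct {y : ι → ℤ → ℂ} (hy : ∀ m, (y m).HasFiniteSupport)
    (k : ℤ) :
    autocorrSum y k = ∑ᶠ n : ℤ, (fun m => y m n) ⬝ᵥ star fun m => y m (n + k) :=
  (finsum_sum_comm _ _ fun m _ => (hy m).mul_left _).symm

theorem mulVec_dotProduct_star_mulVec [DecidableEq ι] [Fintype κ] {U : Matrix κ ι ℂ} {c : ℂ}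
    (hU : Uᴴ * U = c • 1) (v w : ι → ℂ) :
    U *ᵥ v ⬝ᵥ star (U *ᵥ w) = c * (v ⬝ᵥ star w) := by
  rw [star_mulVec, dotProduct_comm, ← dotProduct_mulVec, mulVec_mulVec, hU, smul_mulVec,
    one_mulVec, dotProduct_smul, smul_eq_mul, dotProduct_comm]

theorem autocorrSum_mixSeqs [DecidableEq ι] [Fintype κ] {U : Matrix κ ι ℂ} {c : ℂ}
    (hU : Uᴴ * U = c • 1) {y : ι → ℤ → ℂ} (hy : ∀ q, (y q).HasFiniteSupport) (k : ℤ) :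
    autocorrSum (mixSeqs U y) k = c * autocorrSum y k := by
  have hmix : ∀ m, (mixSeqs U y m).HasFiniteSupport := fun m =>
    HasFiniteSupport.sum (fun q => (hy q).mul_right _) _
  rw [autocorrSum_eq_finsum_dotProduct hmix, autocorrSum_eq_finsum_dotProduct hy, mul_finsum]
  exact finsum_congr fun n => mulVec_dotProduct_star_mulVec hU _ _

theorem IsComplementarySet.delaySeqs {y : ι → ℤ → ℂ} (hy : IsComplementarySet y) (d : ι → ℤ) :
    IsComplementarySet (delaySeqs d y) :=
  ⟨fun q => (hy.1 q).comp_of_injective (sub_left_injective (b := d q)),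
    fun k hk => (autocorrSum_delaySeqs d y k).trans (hy.2 k hk)⟩

theorem IsComplementarySet.mixSeqs [DecidableEq ι] [Fintype κ] {y : ι → ℤ → ℂ}
    (hy : IsComplementarySet y) {U : Matrix κ ι ℂ} {c : ℂ} (hU : Uᴴ * U = c • 1) :
    IsComplementarySet (mixSeqs U y) :=
  ⟨fun m => HasFiniteSupport.sum (fun q => (hy.1 q).mul_right _) _,
    fun k hk => by rw [autocorrSum_mixSeqs hU hy.1, hy.2 k hk, mul_zero]⟩

theorem isComplementarySet_impulse (v : ι → ℂ) :
    IsComplementarySet fun m (n : ℤ) => if n = 0 then v m else 0 := by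
  refine ⟨fun m => (Set.finite_singleton (0 : ℤ)).subset fun n hn => ?_, fun k hk => ?_⟩
  · by_contra h
    exact hn (if_neg h)
  · refine Finset.sum_eq_zero fun m _ => (finsum_congr fun n => ?_).trans finsum_zero
    by_cases hn : n = 0
    · simp [hn, hk]
    · simp [hn]

end ComplementarySet

open ComplementarySet

theorem recursive_paraunitary_algorithm_general
    (M K : ℕ)
    (U : ℕ → Matrix (Fin M) (Fin M) ℂ) (c : ℕ → ℝ)
    (hU : ∀ k, k ≤ K →
      (U k).conjTranspose * U k = ((c k : ℂ)) • (1 : Matrix (Fin M) (Fin M) ℂ))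
    (D : ℕ → Fin M → ℕ) (r : Fin M)
    (x : ℕ → Fin M → ℤ → ℂ)
    (hx0 : ∀ m : Fin M, ∀ n : ℤ, x 0 m n = if n = 0 then U 0 m r else 0)
    (hxrec : ∀ k, 1 ≤ k → k ≤ K → ∀ m : Fin M, ∀ n : ℤ,
      x k m n = ∑ q : Fin M, U k m q * x (k - 1) q (n - (D k q : ℤ))) :
    ∀ k : ℤ, k ≠ 0 →
      ∑ m : Fin M, ∑ᶠ n : ℤ, x K m n * (starRingEnd ℂ) (x K m (n + k)) = 0 := by
  have hstep : ∀ j, 1 ≤ j → j ≤ K →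
      x j = mixSeqs (U j) (delaySeqs (fun q => (D j q : ℤ)) (x (j - 1))) :=
    fun j h1 h2 => funext fun m => funext (hxrec j h1 h2 m)
  have hcomp : ∀ j, j ≤ K → IsComplementarySet (x j) := by
    intro j
    induction j with
    | zero =>
      intro _
      rw [show x 0 = _ from funext fun m => funext (hx0 m)]
      exact isComplementarySet_impulse _
    | succ j ih =>
      intro hj
      rw [hstep (j + 1) (Nat.le_add_left 1 j) hj]
      exact ((ih (Nat.le_of_succ_le hj)).delaySeqs _).mixSeqs (hU (j + 1) hj)
  exact (hcomp K le_rfl).2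

/-- **Proposition 1.** The recursive paraunitary algorithm,
alternating delays and wide-sense unitary mixing steps starting from the
`r`-th column of `U⁽⁰⁾`, produces a complementary set of `M` sequences. -/
theorem recursive_paraunitary_algorithm
    (M K : ℕ) (hM : 1 ≤ M)
    (U : ℕ → Matrix (Fin M) (Fin M) ℂ) (c : ℕ → ℝ)
    (hc : ∀ k, k ≤ K → 0 < c k)
    (hU : ∀ k, k ≤ K →
      (U k).conjTranspose * U k = ((c k : ℂ)) • (1 : Matrix (Fin M) (Fin M) ℂ))
    (D : ℕ → Fin M → ℕ) (r : Fin M)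
    (x : ℕ → Fin M → ℤ → ℂ)
    (hx0 : ∀ m : Fin M, ∀ n : ℤ, x 0 m n = if n = 0 then U 0 m r else 0)
    (hxrec : ∀ k, 1 ≤ k → k ≤ K → ∀ m : Fin M, ∀ n : ℤ,
      x k m n = ∑ q : Fin M, U k m q * x (k - 1) q (n - (D k q : ℤ))) :
    ∀ k : ℤ, k ≠ 0 →
      ∑ m : Fin M, ∑ᶠ n : ℤ, x K m n * (starRingEnd ℂ) (x K m (n + k)) = 0 :=
  recursive_paraunitary_algorithm_general M K U c hU D r x hx0 hxrec
end

section
/- (Theorem 1, time-domain generating matrix.) Let M ≥ 2, K ≥ 1, let π be a permutation of {0,…,K−1}, and let U⁽⁰⁾, …, U⁽ᴷ⁾ be arbitrary M×M complex matrices. Over the polynomial ring ℂ[X], define the M×M matrix polynomial P(X) = U⁽⁰⁾ · ∏_{k=0}^{K−1} ( D⁽ᵏ⁾(X) · U⁽ᵏ⁺¹⁾ ), where D⁽ᵏ⁾(X) is the diagonal matrix with diagonal entries X^{m·M^{π(k)}} for m = 0,…,M−1, and the product is taken in order of increasing k. Then P(X) = ∑_{n=0}^{M^K−1} 𝓜(n)·X^n,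 where 𝓜(n) = U⁽⁰⁾ · ∏_{k=0}^{K−1} ( diag(e_{d_{π(k)}(n)}) · U⁽ᵏ⁺¹⁾ ), e_j denotes the j-th standard basis column vector of ℂ^M, diag(e_j) is the diagonal matrix whose only nonzero diagonal entry is a 1 in position j, and d_k(n) denotes the k-th digit of the radix-M expansion of n. -/
/-!
Writing `diagonal (fun m => x ^ (m * e)) = ∑ d, x ^ (d * e) • diagonal (Pi.single d 1)` and
expanding the ordered product of these sums by multilinearity, `P(X)` becomes a sum over digit
tuples `c : Fin K → Fin M` of `X ^ (∑ k, c k * M ^ π k)` times the selector product. Since `π` is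
a permutation, `c ↦ ∑ k, c k * M ^ π k` is the radix-`M` bijection onto `[0, M ^ K)`, under
which `c k` is the `π k`-th digit of the image.
-/

open Matrix Polynomial

/-- The `k`-th digit of the radix-`M` expansion of `n`, as an element of `Fin M`. -/
def fdig (M : ℕ) (hM : 0 < M) (k n : ℕ) : Fin M :=
  ⟨n / M ^ k % M, Nat.mod_lt _ hM⟩

theorem Matrix.diagonal_eq_sum_smul_diagonal_single {n R : Type*} [Fintype n] [DecidableEq n]
    [Semiring R] (d : n → R) : diagonal d = ∑ i, d i • diagonal (Pi.single i 1) := by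
  ext i j
  simp [Matrix.sum_apply, diagonal_apply, Pi.single_apply]

theorem Matrix.map_diagonal_single_one {n R S : Type*} [DecidableEq n] [Semiring R] [Semiring S]
    (f : R →+* S) (i : n) : (diagonal (Pi.single i 1)).map f = diagonal (Pi.single i 1) := by
  ext a b
  simp [diagonal_apply, Pi.single_apply, apply_ite f]

theorem List.prod_ofFn_sum_smul {R A ι : Type*} [CommSemiring R] [Semiring A] [Algebra R A]
    [Fintype ι] [DecidableEq ι] {K : ℕ} (c : Fin K → ι → R) (B : Fin K → ι → A) :
    (List.ofFn fun k => ∑ i, c k i • B k i).prod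
      = ∑ f : Fin K → ι, (∏ k, c k (f k)) • (List.ofFn fun k => B k (f k)).prod := by
  simp only [← MultilinearMap.mkPiAlgebraFin_apply (R := R), MultilinearMap.map_sum,
    MultilinearMap.map_smul_univ]

theorem Matrix.map_list_prod {n R S : Type*} [Fintype n] [DecidableEq n] [Semiring R] [Semiring S]
    (f : R →+* S) (l : List (Matrix n n R)) : l.prod.map f = (l.map fun A => A.map f).prod :=
  _root_.map_list_prod f.mapMatrix l

theorem List.map_range_eq_ofFn {α : Type*} (K : ℕ) (f : ℕ → α) :
    (List.range K).map f = List.ofFn fun k : Fin K => f k := by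
  rw [List.ofFn_eq_map, ← List.map_coe_finRange_eq_range, List.map_map]
  rfl

theorem Set.InjOn.exists_perm_fin {K : ℕ} {σ : ℕ → ℕ} (hinj : Set.InjOn σ (Set.Iio K))
    (hmaps : Set.MapsTo σ (Set.Iio K) (Set.Iio K)) :
    ∃ τ : Equiv.Perm (Fin K), ∀ k, (τ k : ℕ) = σ k := by
  refine ⟨Equiv.ofBijective (fun k => ⟨σ k, hmaps k.2⟩) ?_, fun _ => rfl⟩
  exact Finite.injective_iff_bijective.mp fun a b hab =>
    Fin.ext (hinj a.2 b.2 (congrArg Fin.val hab))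

theorem fdig_eq_finFunctionFinEquiv_symm {M K : ℕ} (hM : 0 < M) (n : Fin (M ^ K)) (k : Fin K) :
    fdig M hM k n = finFunctionFinEquiv.symm n k :=
  Fin.ext (finFunctionFinEquiv_symm_apply_val n k).symm

theorem prod_ofFn_diagonal_pow_mul_eq_sum {R : Type*} [CommSemiring R] (x : R) {M K : ℕ}
    (τ : Equiv.Perm (Fin K)) (V : Fin K → Matrix (Fin M) (Fin M) R) :
    (List.ofFn fun k => diagonal (fun m : Fin M => x ^ ((m : ℕ) * M ^ (τ k : ℕ))) * V k).prod
      = ∑ n : Fin (M ^ K), x ^ (n : ℕ) •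
          (List.ofFn fun k =>
            diagonal (Pi.single (finFunctionFinEquiv.symm n (τ k)) 1) * V k).prod := by
  have hfactor : ∀ k, diagonal (fun m : Fin M => x ^ ((m : ℕ) * M ^ (τ k : ℕ))) * V k
      = ∑ d : Fin M, x ^ ((d : ℕ) * M ^ (τ k : ℕ)) • (diagonal (Pi.single d 1) * V k) := by
    intro k
    rw [diagonal_eq_sum_smul_diagonal_single, Finset.sum_mul]
    simp only [smul_mul_assoc]
  simp only [hfactor, List.prod_ofFn_sum_smul, Finset.prod_pow_eq_pow_sum]
  -- a digit tuple `c` corresponds to the number whose `τ k`-th radix-`M` digit is `c k`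
  refine Fintype.sum_equiv ((τ.arrowCongr (Equiv.refl _)).trans finFunctionFinEquiv) _ _
    fun c => ?_
  simp only [Equiv.trans_apply, Equiv.symm_apply_apply, finFunctionFinEquiv_apply,
    Equiv.arrowCongr_apply, Equiv.coe_refl, Function.comp_apply, id]
  rw [← Equiv.sum_comp τ fun i => (c (τ.symm i) : ℕ) * M ^ (i : ℕ)]
  simp only [Equiv.symm_apply_apply]

/-- **Theorem 1.** The standard-delay paraunitary generating
matrix `P(X) = U⁽⁰⁾ ∏_k (D⁽ᵏ⁾(X) U⁽ᵏ⁺¹⁾)` with delays `m·M^{σ(k)}` equals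
`∑_{n < M^K} 𝓜(n) Xⁿ`, where
`𝓜(n) = U⁽⁰⁾ ∏_k (diag(e_{d_{σ(k)}(n)}) U⁽ᵏ⁺¹⁾)`. -/
theorem time_domain_generating_matrix
    (M K : ℕ) (hM : 2 ≤ M)
    (σ : ℕ → ℕ) (hσ : Set.BijOn σ (Set.Iio K) (Set.Iio K))
    (U : ℕ → Matrix (Fin M) (Fin M) ℂ)
    (P : Matrix (Fin M) (Fin M) (Polynomial ℂ))
    (hP : P = (U 0).map Polynomial.C *
      ((List.range K).map (fun k =>
        Matrix.diagonal (fun m : Fin M => (Polynomial.X : Polynomial ℂ) ^ ((m : ℕ) * M ^ σ k)) *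
          (U (k + 1)).map Polynomial.C)).prod)
    (𝓜 : ℕ → Matrix (Fin M) (Fin M) ℂ)
    (h𝓜 : ∀ n, 𝓜 n = U 0 *
      ((List.range K).map (fun k =>
        Matrix.diagonal (Pi.single (fdig M (by omega) (σ k) n) (1 : ℂ)) *
          U (k + 1))).prod) :
    P = ∑ n ∈ Finset.range (M ^ K),
          (Polynomial.X : Polynomial ℂ) ^ n • (𝓜 n).map Polynomial.C := by
  obtain ⟨τ, hτ⟩ := hσ.injOn.exists_perm_fin hσ.mapsTo
  rw [hP, List.map_range_eq_ofFn]
  simp only [← hτ]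
  rw [prod_ofFn_diagonal_pow_mul_eq_sum, Finset.mul_sum, ← Fin.sum_univ_eq_sum_range]
  refine Finset.sum_congr rfl fun n _ => ?_
  rw [mul_smul_comm, h𝓜, List.map_range_eq_ofFn, Matrix.map_mul, Matrix.map_list_prod,
    List.map_ofFn]
  simp only [Function.comp_def, Matrix.map_mul, map_diagonal_single_one, ← hτ,
    fdig_eq_finFunctionFinEquiv_symm]
end

section
/- (PU sets form a complete complementary code.) Let M ≥ 1, K ≥ 0, let U⁽⁰⁾, …, U⁽ᴷ⁾ be M×M complex matrices with (U⁽ˡ⁾)ᴴ·U⁽ˡ⁾ = γ_l·I for real γ_l > 0, and let D_m⁽ᵏ⁾ be arbitrary nonnegative integers. Define P(X) = U⁽⁰⁾ · ∏_{k=0}^{K−1} ( D⁽ᵏ⁾(X) · U⁽ᵏ⁺¹⁾ ) over ℂ[X], where D⁽ᵏ⁾(X) = diag(X^{D_0⁽ᵏ⁾}, …, X^{D_{M−1}⁽ᵏ⁾}), and let P_n denote the coefficient matrix of X^n. For p ∈ {0,…,M−1}, let the p-th set consist of the M sequences x_r^{(p)}(n) = (P_n)_{r,p}, r = 0,…,M−1.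 Then: (i) each set is a complementary set, i.e. for every nonzero integer k, ∑_{r=0}^{M−1} ∑_{n∈ℤ} x_r^{(p)}(n)·conj(x_r^{(p)}(n+k)) = 0; and (ii) distinct sets are mutually orthogonal, i.e. for p ≠ q and every integer k, ∑_{r=0}^{M−1} ∑_{n∈ℤ} conj(x_r^{(p)}(n))·x_r^{(q)}(n+k) = 0. Hence the M columns of P form a complete complementary code. -/
/-!
Write `P̃(X) = P(X⁻¹)ᴴ`. The `(p, q)` entry of `P̃ P` is the Laurent polynomial whose `k`-th
coefficient is the aperiodic cross-correlation at lag `k` of the sequence sets in columns `p`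
and `q`. Since `(A B)˜ = B̃ Ã`, the property `P̃ P = c I` with `c` a constant is closed under
products; the unitaries `U⁽ˡ⁾` have it by hypothesis and the delay matrices `diag(X^d)` with
`c = 1`. So `P̃ P = c I`: its off-diagonal entries vanish and its diagonal entries have no
coefficient at a nonzero lag.
-/

open Matrix Polynomial
open scoped LaurentPolynomial

namespace Polynomial

variable {R : Type*} [CommSemiring R]

lemma coeff_toLaurent_apply (p : R[X]) (n : ℤ) :
    (toLaurent p).coeff n = if 0 ≤ n then p.coeff n.toNat else 0 := by
  rw [LaurentPolynomial.coeff_toLaurent]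
  split_ifs with hn
  · lift n to ℕ using hn
    exact Finsupp.mapDomain_apply Nat.cast_injective _ n
  · refine Finsupp.mapDomain_of_notMem_range _ _ ?_
    rintro ⟨m, rfl⟩
    exact hn (Int.natCast_nonneg m)

variable [StarRing R]

/-- The para-conjugate `p̃(X) = p*(X⁻¹)`, with conjugated coefficients. -/
noncomputable def paraConj : R[X] →+* R[T;T⁻¹] :=
  eval₂RingHom (LaurentPolynomial.C.comp (starRingEnd R)) (LaurentPolynomial.T (-1))

@[simp] lemma paraConj_C (a : R) : paraConj (C a) = LaurentPolynomial.C (star a) := by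
  simp [paraConj, starRingEnd_apply]

@[simp] lemma paraConj_X_pow (d : ℕ) : paraConj (X ^ d : R[X]) = LaurentPolynomial.T (-d) := by
  simp [paraConj, LaurentPolynomial.T_pow]

lemma coeff_paraConj (p : R[X]) (k : ℤ) :
    (paraConj p).coeff k = star ((toLaurent p).coeff (-k)) := by
  induction p using Polynomial.induction_on' with
  | add p q hp hq => simp [hp, hq]
  | monomial n a =>
    rw [← C_mul_X_pow_eq_monomial, map_mul, paraConj_C, paraConj_X_pow, toLaurent_C_mul_X_pow,
      ← LaurentPolynomial.single_eq_C_mul_T, ← LaurentPolynomial.single_eq_C_mul_T]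
    simp only [AddMonoidAlgebra.coeff_single, Finsupp.single_apply, neg_eq_iff_eq_neg]
    split_ifs <;> simp

lemma coeff_paraConj_mul_toLaurent (p q : R[X]) (k : ℤ) :
    (paraConj p * toLaurent q).coeff k
      = ∑ᶠ n : ℤ, star ((toLaurent p).coeff n) * (toLaurent q).coeff (n + k) := by
  rw [AddMonoidAlgebra.coeff_mul_apply_left, Finsupp.sum,
    ← finsum_eq_sum_of_support_subset _ (fun n hn ↦ by
      simpa using left_ne_zero_of_mul (Function.mem_support.mp hn))]
  refine (finsum_comp_equiv (Equiv.neg ℤ)).symm.trans (finsum_congr fun n ↦ ?_)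
  simp [coeff_paraConj]

end Polynomial

namespace Matrix

variable {ι R : Type*} [Fintype ι] [CommSemiring R] [StarRing R]

noncomputable def paraGram (A : Matrix ι ι R[X]) : Matrix ι ι R[T;T⁻¹] :=
  (A.map paraConj)ᵀ * A.map toLaurent

noncomputable def correlation (A : Matrix ι ι R[X]) (p q : ι) (k : ℤ) : R :=
  ∑ r, ∑ᶠ n : ℤ, star ((toLaurent (A r p)).coeff n) * (toLaurent (A r q)).coeff (n + k)

lemma coeff_paraGram_apply (A : Matrix ι ι R[X]) (p q : ι) (k : ℤ) :
    (paraGram A p q).coeff k = correlation A p q k := by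
  simp only [paraGram, mul_apply, transpose_apply, map_apply, AddMonoidAlgebra.coeff_sum,
    Finsupp.finsetSum_apply, coeff_paraConj_mul_toLaurent, correlation]

lemma star_correlation (A : Matrix ι ι R[X]) (p q : ι) (k : ℤ) :
    star (correlation A p q k)
      = ∑ r, ∑ᶠ n : ℤ, (toLaurent (A r p)).coeff n * star ((toLaurent (A r q)).coeff (n + k)) := by
  rw [correlation, star_sum]
  refine Finset.sum_congr rfl fun r _ ↦ ?_
  rw [← starAddEquiv_apply, AddEquivClass.map_finsum]
  refine finsum_congr fun n ↦ ?_
  rw [starAddEquiv_apply, star_mul', star_star, mul_comm]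

variable [DecidableEq ι]

/-- Wide-sense paraunitarity, except that the constant `c` may be zero. -/
def IsParaunitary (A : Matrix ι ι R[X]) : Prop :=
  ∃ c : R, paraGram A = LaurentPolynomial.C c • 1

lemma isParaunitary_one : IsParaunitary (1 : Matrix ι ι R[X]) :=
  ⟨1, by simp [paraGram]⟩

lemma IsParaunitary.mul {A B : Matrix ι ι R[X]} (hA : IsParaunitary A) (hB : IsParaunitary B) :
    IsParaunitary (A * B) := by
  obtain ⟨a, ha⟩ := hA
  obtain ⟨b, hb⟩ := hB
  refine ⟨a * b, ?_⟩
  calc paraGram (A * B)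
      = (B.map paraConj)ᵀ * paraGram A * B.map toLaurent := by
        simp only [paraGram, Matrix.map_mul, transpose_mul, Matrix.mul_assoc]
    _ = LaurentPolynomial.C (a * b) • 1 := by
        rw [ha, Matrix.mul_smul, Matrix.mul_one, Matrix.smul_mul, ← paraGram, hb, smul_smul,
          map_mul]

lemma isParaunitary_map_C {W : Matrix ι ι R} {c : R} (hW : Wᴴ * W = c • 1) :
    IsParaunitary (W.map Polynomial.C) := by
  refine ⟨c, ?_⟩
  have hconj : ((W.map Polynomial.C).map paraConj)ᵀ = Wᴴ.map LaurentPolynomial.C := by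
    ext i j
    simp
  calc paraGram (W.map Polynomial.C)
      = (Wᴴ * W).map LaurentPolynomial.C := by
        rw [paraGram, hconj, Matrix.map_map, toLaurent_comp_C, Matrix.map_mul]
    _ = LaurentPolynomial.C c • 1 := by
        rw [hW, smul_one_eq_diagonal, smul_one_eq_diagonal, diagonal_map (map_zero _)]

lemma isParaunitary_diagonal_X_pow (d : ι → ℕ) :
    IsParaunitary (diagonal fun i ↦ (X : R[X]) ^ d i) := by
  refine ⟨1, ?_⟩
  rw [paraGram, diagonal_map (map_zero _), diagonal_map (map_zero _), diagonal_transpose,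
    diagonal_mul_diagonal, map_one, one_smul, ← diagonal_one]
  congr 1
  funext i
  rw [paraConj_X_pow, toLaurent_X_pow, ← LaurentPolynomial.T_add, neg_add_cancel,
    LaurentPolynomial.T_zero]

lemma IsParaunitary.correlation_eq_zero_of_ne {A : Matrix ι ι R[X]} (hA : IsParaunitary A)
    {p q : ι} (hpq : p ≠ q) (k : ℤ) : correlation A p q k = 0 := by
  obtain ⟨c, hc⟩ := hA
  rw [← coeff_paraGram_apply, hc, smul_apply, one_apply_ne hpq, smul_zero,
    AddMonoidAlgebra.coeff_zero, Finsupp.coe_zero, Pi.zero_apply]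

lemma IsParaunitary.correlation_self_eq_zero {A : Matrix ι ι R[X]} (hA : IsParaunitary A)
    (p : ι) {k : ℤ} (hk : k ≠ 0) : correlation A p p k = 0 := by
  obtain ⟨c, hc⟩ := hA
  rw [← coeff_paraGram_apply, hc, smul_apply, one_apply_eq, smul_eq_mul, mul_one,
    LaurentPolynomial.C_apply, if_neg hk]

end Matrix

theorem paraunitary_sets_form_CCC_general
    (M K : ℕ)
    (U : ℕ → Matrix (Fin M) (Fin M) ℂ) (γ : ℕ → ℝ)
    (hU : ∀ l, l ≤ K →
      (U l).conjTranspose * U l = ((γ l : ℂ)) • (1 : Matrix (Fin M) (Fin M) ℂ))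
    (D : ℕ → Fin M → ℕ)
    (P : Matrix (Fin M) (Fin M) (Polynomial ℂ))
    (hP : P = (U 0).map Polynomial.C *
      ((List.range K).map (fun k =>
        Matrix.diagonal (fun m : Fin M => (Polynomial.X : Polynomial ℂ) ^ (D k m)) *
          (U (k + 1)).map Polynomial.C)).prod)
    (x : Fin M → Fin M → ℤ → ℂ)
    (hx : ∀ p r : Fin M, ∀ n : ℤ,
      x p r n = if 0 ≤ n then (P r p).coeff n.toNat else 0) :
    (∀ p : Fin M, ∀ k : ℤ, k ≠ 0 →
      ∑ r : Fin M, ∑ᶠ n : ℤ, x p r n * (starRingEnd ℂ) (x p r (n + k)) = 0) ∧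
    (∀ p q : Fin M, p ≠ q → ∀ k : ℤ,
      ∑ r : Fin M, ∑ᶠ n : ℤ, (starRingEnd ℂ) (x p r n) * x q r (n + k) = 0) := by
  have hPU : P.IsParaunitary := by
    rw [hP]
    refine (isParaunitary_map_C (hU 0 K.zero_le)).mul
      (List.prod_induction _ (fun _ _ ↦ IsParaunitary.mul) isParaunitary_one ?_)
    simp only [List.mem_map, List.mem_range]
    rintro _ ⟨k, hk, rfl⟩
    exact (isParaunitary_diagonal_X_pow _).mul (isParaunitary_map_C (hU (k + 1) hk))
  have hxP : ∀ p r n, x p r n = (toLaurent (P r p)).coeff n := fun p r n ↦ by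
    rw [hx, coeff_toLaurent_apply]
  simp only [hxP, starRingEnd_apply]
  refine ⟨fun p k hk ↦ ?_, fun p q hpq k ↦ hPU.correlation_eq_zero_of_ne hpq k⟩
  rw [← star_correlation, hPU.correlation_self_eq_zero p hk, star_zero]

/-- The columns of the paraunitary generating matrix
`P(X) = U⁽⁰⁾ ∏_k (D⁽ᵏ⁾(X) U⁽ᵏ⁺¹⁾)` form a complete complementary code: each
column is a complementary set of `M` sequences, and distinct columns are
mutually orthogonal (all cross-correlation sums vanish at every lag). -/
theorem paraunitary_sets_form_CCC
    (M K : ℕ) (hM : 1 ≤ M)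
    (U : ℕ → Matrix (Fin M) (Fin M) ℂ) (γ : ℕ → ℝ)
    (hγ : ∀ l, l ≤ K → 0 < γ l)
    (hU : ∀ l, l ≤ K →
      (U l).conjTranspose * U l = ((γ l : ℂ)) • (1 : Matrix (Fin M) (Fin M) ℂ))
    (D : ℕ → Fin M → ℕ)
    (P : Matrix (Fin M) (Fin M) (Polynomial ℂ))
    (hP : P = (U 0).map Polynomial.C *
      ((List.range K).map (fun k =>
        Matrix.diagonal (fun m : Fin M => (Polynomial.X : Polynomial ℂ) ^ (D k m)) *
          (U (k + 1)).map Polynomial.C)).prod)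
    (x : Fin M → Fin M → ℤ → ℂ)
    (hx : ∀ p r : Fin M, ∀ n : ℤ,
      x p r n = if 0 ≤ n then (P r p).coeff n.toNat else 0) :
    (∀ p : Fin M, ∀ k : ℤ, k ≠ 0 →
      ∑ r : Fin M, ∑ᶠ n : ℤ, x p r n * (starRingEnd ℂ) (x p r (n + k)) = 0) ∧
    (∀ p q : Fin M, p ≠ q → ∀ k : ℤ,
      ∑ r : Fin M, ∑ᶠ n : ℤ, (starRingEnd ℂ) (x p r n) * x q r (n + k) = 0) :=
  paraunitary_sets_form_CCC_general M K U γ hU D P hP x hx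
end

section
/- (DFT-based polyphase standard sets form a complete complementary code.) Let M ≥ 2, K ≥ 1, w = e^{2πi/M} ∈ ℂ, and let π be a permutation of {0,…,K−1}. For r, s ∈ {0,…,M−1} and n ∈ {0,…,M^K−1}, define x_s^{(r)}(n) = w^{μ_{r,s}(n)} with μ_{r,s}(n) = r·d_{π(0)}(n) + ∑_{k=1}^{K−1} d_{π(k−1)}(n)·d_{π(k)}(n) + d_{π(K−1)}(n)·s, where d_k(n) denotes the k-th digit of the radix-M expansion of n; extend each x_s^{(r)} by zero outside {0,…,M^K−1}. Then: (i) for each fixed r, the M sequences x_0^{(r)}, …, x_{M−1}^{(r)} form a complementary set: for every nonzero integer k, ∑_{s=0}^{M−1} ∑_{n} x_s^{(r)}(n)·conj(x_s^{(r)}(n+k)) = 0; and (ii) for r ≠ r' and every integer k, ∑_{s=0}^{M−1} ∑_{n} conj(x_s^{(r)}(n))·x_s^{(r')}(n+k) = 0. Hence the M sets indexed by r form a complete complementary code of M sets of M sequences of length M^K. -/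
/-- The `k`-th digit of the radix-`M` expansion of `n`. -/
def dig (M k n : ℕ) : ℕ := n / M ^ k % M

/-!
Write `n = ∑ b_q M ^ q` and read its digits along the path `a_i = b_{σ i}`, so that
`μ_{r,s}(n) = r a_0 + ∑ a_{i-1} a_i + a_{K-1} s`. In `∑_s conj (x_s^{(r)}(n)) x_s^{(r')}(n + k)` the
sum over `s` vanishes unless `n` and `n + k` have the same last path digit. If `k ≠ 0`, such a pair
differs at some last path position `j < K - 1`; overwriting the common digit at path position
`j + 1` of both by `t` keeps the pair admissible with the same `j`, and changes the exponent by
`(a'_j - a_j) t` on top of a term independent of `t`, so the sum over `t` vanishes. If `k = 0` and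
`r ≠ r'`, overwriting `a_0` by `t` contributes `(r' - r) t` instead.
-/

open Finset Function ComplexConjugate

theorem IsPrimitiveRoot.sum_zpow_sub_mul_eq_zero {w : ℂ} {M : ℕ} (hw : IsPrimitiveRoot w M)
    {a b : ℕ} (ha : a < M) (hb : b < M) (hab : a ≠ b) :
    ∑ s : Fin M, w ^ (((a : ℤ) - b) * s) = 0 := by
  set u := w ^ ((a : ℤ) - b)
  have hu : u ≠ 1 := fun h => hab <| by
    have := Int.eq_zero_of_abs_lt_dvd ((hw.zpow_eq_one_iff_dvd _).1 h)
      (abs_lt.2 ⟨by omega, by omega⟩)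
    omega
  have huM : u ^ M = 1 := by
    rw [← zpow_natCast, ← zpow_mul, mul_comm, zpow_mul, zpow_natCast, hw.pow_eq_one, one_zpow]
  calc ∑ s : Fin M, w ^ (((a : ℤ) - b) * s) = ∑ s ∈ range M, u ^ s := by
        rw [← Fin.sum_univ_eq_sum_range]
        simp only [u, zpow_mul, zpow_natCast]
    _ = 0 := by rw [geom_sum_eq hu, huM, sub_self, zero_div]

theorem Finset.sum_eq_zero_of_resample {β T A : Type*} [Fintype T]
    [AddCommMonoid A] [IsAddTorsionFree A] {S : Finset β} {u : T → β → β} (f : β → A)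
    (hmem : ∀ p ∈ S, ∀ t, u t p ∈ S) (hidem : ∀ p ∈ S, ∀ t t', u t (u t' p) = u t p)
    (hinj : ∀ p ∈ S, Injective (u · p)) (hfix : ∀ p ∈ S, ∃ t, u t p = p)
    (hzero : ∀ p ∈ S, ∑ t, f (u t p) = 0) :
    ∑ p ∈ S, f p = 0 := by
  rcases S.eq_empty_or_nonempty with rfl | ⟨p₀, hp₀⟩
  · exact sum_empty
  have : Nonempty T := ⟨(hfix p₀ hp₀).choose⟩
  choose read hread using hfix
  have hread_u : ∀ p (hp : p ∈ S) t, read (u t p) (hmem p hp t) = t := fun p hp t =>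
    hinj p hp <| by simpa only [hidem p hp] using hread (u t p) (hmem p hp t)
  -- `(p, t) ↦ (u t p, read p)` is an involution of `S × T`
  have hswap : ∑ x ∈ S ×ˢ (univ : Finset T), f (u x.2 x.1) =
      ∑ x ∈ S ×ˢ (univ : Finset T), f x.1 := by
    refine sum_bij' (fun x hx => (u x.2 x.1, read x.1 (mem_product.1 hx).1))
      (fun x hx => (u x.2 x.1, read x.1 (mem_product.1 hx).1)) ?_ ?_ ?_ ?_ (fun _ _ => rfl)
    all_goals
      rintro ⟨p, t⟩ hx
      obtain ⟨hp, -⟩ := mem_product.1 hx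
    iterate 2 exact mem_product.2 ⟨hmem p hp t, mem_univ _⟩
    iterate 2 exact Prod.ext (by simp only [hidem p hp, hread]) (hread_u p hp t)
  have : Fintype.card T • ∑ p ∈ S, f p = 0 := by
    rw [← sum_eq_zero hzero, ← sum_product (f := fun x => f (u x.2 x.1)), hswap, sum_product,
      smul_sum]
    simp
  exact (nsmul_eq_zero_iff_right Fintype.card_ne_zero).1 this

theorem finsum_mul_shift_eq_sum_filter {R V : Type*} [Semiring R] [Fintype V] {ι : V → ℤ}
    (hι : Injective ι) {f g : ℤ → R} (hf : f.support ⊆ Set.range ι)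
    (hg : g.support ⊆ Set.range ι) (k : ℤ) :
    ∑ᶠ n, f n * g (n + k) =
      ∑ p ∈ univ.filter (fun p : V × V => ι p.2 = ι p.1 + k), f (ι p.1) * g (ι p.2) := by
  classical
  have hg_sum : ∀ m, g m = ∑ v, if ι v = m then g (ι v) else 0 := by
    intro m
    by_cases hm : m ∈ Set.range ι
    · obtain ⟨v, rfl⟩ := hm
      simp [hι.eq_iff]
    · rw [sum_eq_zero fun v _ => if_neg fun h => hm ⟨v, h⟩]
      exact notMem_support.1 fun h => hm (hg h)
  rw [finsum_eq_sum_of_support_subset (s := univ.map ⟨ι, hι⟩), sum_map, sum_filter,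
    Fintype.sum_prod_type]
  · refine sum_congr rfl fun v _ => ?_
    simp only [Embedding.coeFn_mk, hg_sum (ι v + k), mul_sum, mul_ite, mul_zero]
  · simpa using (support_mul_subset_left _ _).trans hf

theorem sum_Ico_mul_sub_mul_eq_of_eqOn {a a' : ℕ → ℤ} {j K : ℕ} (hj : j + 1 < K)
    (h : ∀ i, j < i → i < K → a' i = a i) :
    ∑ i ∈ Ico 1 K, (a' (i - 1) * a' i - a (i - 1) * a i) =
      ∑ i ∈ Ico 1 (j + 1), (a' (i - 1) * a' i - a (i - 1) * a i) + (a' j - a j) * a (j + 1) := by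
  rw [← sum_Ico_consecutive _ (by omega : 1 ≤ j + 1) hj.le, sum_eq_sum_Ico_succ_bot hj,
    sum_eq_zero (s := Ico (j + 1 + 1) K) fun i hi => ?_]
  · rw [h (j + 1) (by omega) hj, Nat.add_sub_cancel]
    ring
  · obtain ⟨hi1, hi2⟩ := mem_Ico.1 hi
    rw [h i (by omega) hi2, h (i - 1) (by omega) (by omega), sub_self]

section Digits

variable {M K : ℕ}

theorem dig_finFunctionFinEquiv (b : Fin K → Fin M) {q : ℕ} (hq : q < K) :
    dig M q (finFunctionFinEquiv b) = b ⟨q, hq⟩ := by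
  have := finFunctionFinEquiv_symm_apply_val (finFunctionFinEquiv b) ⟨q, hq⟩
  rw [Equiv.symm_apply_apply] at this
  exact this.symm

theorem finFunctionFinEquiv_update (b : Fin K → Fin M) (i : Fin K) (t : Fin M) :
    ((finFunctionFinEquiv (update b i t) : ℕ) : ℤ) =
      (finFunctionFinEquiv b : ℕ) + ((t : ℤ) - b i) * M ^ (i : ℕ) := by
  simp only [finFunctionFinEquiv_apply, Nat.cast_sum, Nat.cast_mul, Nat.cast_pow]
  rw [← add_sum_erase _ _ (mem_univ i), ← add_sum_erase _ _ (mem_univ i), update_self,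
    sum_congr rfl fun j hj => by rw [update_of_ne (ne_of_mem_erase hj)]]
  ring

def setDigit (b : Fin K → Fin M) (q : ℕ) (t : Fin M) : Fin K → Fin M :=
  fun i => if (i : ℕ) = q then t else b i

theorem setDigit_eq_update (b : Fin K → Fin M) {q : ℕ} (hq : q < K) (t : Fin M) :
    setDigit b q t = update b ⟨q, hq⟩ t := by
  funext i
  simp [setDigit, update_apply, Fin.ext_iff]

theorem setDigit_setDigit (b : Fin K → Fin M) (q : ℕ) (t t' : Fin M) :
    setDigit (setDigit b q t') q t = setDigit b q t := by
  funext i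
  simp only [setDigit]
  split_ifs <;> rfl

theorem dig_setDigit (b : Fin K → Fin M) {q i : ℕ} (hi : i < K) (t : Fin M) :
    dig M i (finFunctionFinEquiv (setDigit b q t)) =
      if i = q then (t : ℕ) else dig M i (finFunctionFinEquiv b) := by
  rw [dig_finFunctionFinEquiv _ hi, dig_finFunctionFinEquiv _ hi, setDigit]
  split_ifs <;> rfl

theorem setDigit_sub_setDigit (b b' : Fin K → Fin M) {q : ℕ} (hq : q < K)
    (h : dig M q (finFunctionFinEquiv b) = dig M q (finFunctionFinEquiv b')) (t : Fin M) :
    ((finFunctionFinEquiv (setDigit b' q t) : ℕ) : ℤ) - (finFunctionFinEquiv (setDigit b q t) : ℕ) =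
      (finFunctionFinEquiv b' : ℕ) - (finFunctionFinEquiv b : ℕ) := by
  rw [dig_finFunctionFinEquiv _ hq, dig_finFunctionFinEquiv _ hq] at h
  rw [setDigit_eq_update _ hq, setDigit_eq_update _ hq, finFunctionFinEquiv_update,
    finFunctionFinEquiv_update, h]
  ring

end Digits

namespace StandardSet

variable {M K : ℕ} (σ : ℕ → ℕ)

def chain (b : Fin K → Fin M) (i : ℕ) : ℕ := dig M (σ i) (finFunctionFinEquiv b)

def pathExponent (K r s : ℕ) (a : ℕ → ℕ) : ℕ :=
  r * a 0 + ∑ i ∈ Ico 1 K, a (i - 1) * a i + a (K - 1) * s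

def crossExponent (r r' : ℕ) (p : (Fin K → Fin M) × (Fin K → Fin M)) : ℤ :=
  (pathExponent K r' 0 (chain σ p.2) : ℤ) - pathExponent K r 0 (chain σ p.1)

def pairSet (M K : ℕ) (σ : ℕ → ℕ) (k : ℤ) : Finset ((Fin K → Fin M) × (Fin K → Fin M)) :=
  univ.filter fun p => ((finFunctionFinEquiv p.2 : ℕ) : ℤ) = (finFunctionFinEquiv p.1 : ℕ) + k ∧
    chain σ p.1 (K - 1) = chain σ p.2 (K - 1)

def pivot (p : (Fin K → Fin M) × (Fin K → Fin M)) : ℕ :=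
  Nat.findGreatest (fun i => chain σ p.1 i ≠ chain σ p.2 i) (K - 1)

def resample (q : ℕ) (t : Fin M) (p : (Fin K → Fin M) × (Fin K → Fin M)) :
    (Fin K → Fin M) × (Fin K → Fin M) :=
  (setDigit p.1 q t, setDigit p.2 q t)

variable {σ}

theorem chain_lt (hσ : Set.MapsTo σ (Set.Iio K) (Set.Iio K)) (b : Fin K → Fin M) {i : ℕ}
    (hi : i < K) : chain σ b i < M := by
  rw [chain, dig_finFunctionFinEquiv _ (hσ hi)]
  exact Fin.isLt _

theorem chain_setDigit (hσ : Set.BijOn σ (Set.Iio K) (Set.Iio K)) (b : Fin K → Fin M) {q i : ℕ}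
    (hq : q < K) (hi : i < K) (t : Fin M) :
    chain σ (setDigit b (σ q) t) i = if i = q then (t : ℕ) else chain σ b i := by
  simp only [chain, dig_setDigit _ (hσ.mapsTo hi), hσ.injOn.eq_iff hi hq]

theorem crossExponent_eq (r r' : ℕ) (p : (Fin K → Fin M) × (Fin K → Fin M)) :
    crossExponent σ r r' p = r' * chain σ p.2 0 - r * chain σ p.1 0 +
      ∑ i ∈ Ico 1 K, ((chain σ p.2 (i - 1) : ℤ) * chain σ p.2 i -
        chain σ p.1 (i - 1) * chain σ p.1 i) := by
  simp only [crossExponent, pathExponent, mul_zero, add_zero, Nat.cast_add, Nat.cast_mul,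
    Nat.cast_sum, sum_sub_distrib]
  ring

theorem resample_resample (q : ℕ) (t t' : Fin M) (p : (Fin K → Fin M) × (Fin K → Fin M)) :
    resample q t (resample q t' p) = resample q t p := by
  simp only [resample, setDigit_setDigit]

theorem resample_injective {q : ℕ} (hq : q < K) (p : (Fin K → Fin M) × (Fin K → Fin M)) :
    Injective fun t => resample q t p := by
  intro t t' h
  simpa [resample, setDigit] using congrFun (congrArg Prod.fst h) ⟨q, hq⟩

theorem exists_resample_eq_self {q : ℕ} (hq : q < K) {p : (Fin K → Fin M) × (Fin K → Fin M)}
    (h : dig M q (finFunctionFinEquiv p.1) = dig M q (finFunctionFinEquiv p.2)) :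
    ∃ t, resample q t p = p := by
  rw [dig_finFunctionFinEquiv _ hq, dig_finFunctionFinEquiv _ hq] at h
  refine ⟨p.1 ⟨q, hq⟩, Prod.ext ?_ ?_⟩
  · exact (setDigit_eq_update _ hq _).trans (update_eq_self _ _)
  · exact (setDigit_eq_update _ hq _).trans (by rw [Fin.ext h, update_eq_self])

theorem resample_mem_pairSet (hσ : Set.BijOn σ (Set.Iio K) (Set.Iio K)) {k : ℤ} {q : ℕ}
    (hq : q < K) {p : (Fin K → Fin M) × (Fin K → Fin M)} (hp : p ∈ pairSet M K σ k)
    (hagree : chain σ p.1 q = chain σ p.2 q) (t : Fin M) :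
    resample (σ q) t p ∈ pairSet M K σ k := by
  simp only [pairSet, mem_filter, mem_univ, true_and, resample] at hp ⊢
  refine ⟨?_, ?_⟩
  · linarith [setDigit_sub_setDigit p.1 p.2 (hσ.mapsTo hq) hagree t]
  · rw [chain_setDigit hσ _ hq (by omega), chain_setDigit hσ _ hq (by omega)]
    split_ifs
    exacts [rfl, hp.2]

theorem pivot_spec (hσ : Set.SurjOn σ (Set.Iio K) (Set.Iio K)) {k : ℤ} (hk : k ≠ 0)
    {p : (Fin K → Fin M) × (Fin K → Fin M)} (hp : p ∈ pairSet M K σ k) :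
    chain σ p.1 (pivot σ p) ≠ chain σ p.2 (pivot σ p) ∧ pivot σ p + 1 < K ∧
      ∀ i, pivot σ p < i → i < K → chain σ p.1 i = chain σ p.2 i := by
  simp only [pairSet, mem_filter, mem_univ, true_and] at hp
  obtain ⟨q, hq⟩ : ∃ q, p.1 q ≠ p.2 q := Function.ne_iff.1 fun h => hk (by rw [h] at hp; omega)
  obtain ⟨i, hi, hiq⟩ : ∃ i, i < K ∧ σ i = q := hσ q.isLt
  have hdiff : chain σ p.1 i ≠ chain σ p.2 i := by
    simp only [chain, hiq]
    rwa [dig_finFunctionFinEquiv _ q.isLt, dig_finFunctionFinEquiv _ q.isLt, Ne, Fin.val_inj]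
  have hspec : chain σ p.1 (pivot σ p) ≠ chain σ p.2 (pivot σ p) :=
    Nat.findGreatest_spec (P := fun i => chain σ p.1 i ≠ chain σ p.2 i)
      (Nat.le_sub_one_of_lt hi) hdiff
  have hle : pivot σ p ≤ K - 1 := Nat.findGreatest_le _
  have hlast : pivot σ p ≠ K - 1 := fun h => hspec (by rw [h]; exact hp.2)
  exact ⟨hspec, by omega, fun i hi hiK => not_not.1 (Nat.findGreatest_is_greatest hi (by omega))⟩

theorem pivot_resample (hσ : Set.BijOn σ (Set.Iio K) (Set.Iio K)) {k : ℤ} (hk : k ≠ 0)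
    {p : (Fin K → Fin M) × (Fin K → Fin M)} (hp : p ∈ pairSet M K σ k) (t : Fin M) :
    pivot σ (resample (σ (pivot σ p + 1)) t p) = pivot σ p := by
  obtain ⟨hne, hj, hgt⟩ := pivot_spec hσ.surjOn hk hp
  rw [pivot, Nat.findGreatest_eq_iff]
  refine ⟨by omega, fun _ => ?_, fun i hi hiK => ?_⟩
  · rwa [resample, chain_setDigit hσ _ hj (by omega), chain_setDigit hσ _ hj (by omega),
      if_neg (by omega), if_neg (by omega)]
  · rw [resample, chain_setDigit hσ _ hj (by omega), chain_setDigit hσ _ hj (by omega)]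
    split_ifs
    exacts [not_not.2 rfl, not_not.2 (hgt i hi (by omega))]

theorem crossExponent_resample_pivot (hσ : Set.BijOn σ (Set.Iio K) (Set.Iio K)) {k : ℤ}
    (hk : k ≠ 0) {p : (Fin K → Fin M) × (Fin K → Fin M)} (hp : p ∈ pairSet M K σ k) (r r' : ℕ) :
    ∃ B : ℤ, ∀ t : Fin M, crossExponent σ r r' (resample (σ (pivot σ p + 1)) t p) =
      B + ((chain σ p.2 (pivot σ p) : ℤ) - chain σ p.1 (pivot σ p)) * t := by
  obtain ⟨-, hj, hgt⟩ := pivot_spec hσ.surjOn hk hp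
  set j := pivot σ p
  have hlow : ∀ (b : Fin K → Fin M) (t : Fin M) i, i ≤ j →
      chain σ (setDigit b (σ (j + 1)) t) i = chain σ b i := fun b t i hi => by
    rw [chain_setDigit hσ _ hj (by omega), if_neg (by omega)]
  refine ⟨r' * chain σ p.2 0 - r * chain σ p.1 0 + ∑ i ∈ Ico 1 (j + 1),
    ((chain σ p.2 (i - 1) : ℤ) * chain σ p.2 i - chain σ p.1 (i - 1) * chain σ p.1 i),
    fun t => ?_⟩
  simp only [crossExponent_eq, resample]
  rw [sum_Ico_mul_sub_mul_eq_of_eqOn (a := fun i => (chain σ (setDigit p.1 (σ (j + 1)) t) i : ℤ))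
    (a' := fun i => (chain σ (setDigit p.2 (σ (j + 1)) t) i : ℤ)) hj fun i hi hiK => ?_]
  · rw [hlow _ _ 0 (by omega), hlow _ _ 0 (by omega), hlow _ _ j le_rfl, hlow _ _ j le_rfl,
      chain_setDigit hσ _ hj hj, if_pos rfl,
      sum_congr rfl fun i hi => by
        have := mem_Ico.1 hi
        rw [hlow _ _ i (by omega), hlow _ _ i (by omega), hlow _ _ (i - 1) (by omega),
          hlow _ _ (i - 1) (by omega)],
      add_assoc]
  · rw [chain_setDigit hσ _ hj hiK, chain_setDigit hσ _ hj hiK]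
    split_ifs
    exacts [rfl, congrArg _ (hgt i hi hiK).symm]

theorem sum_pairSet_eq_zero {w : ℂ} (hw : IsPrimitiveRoot w M)
    (hσ : Set.BijOn σ (Set.Iio K) (Set.Iio K)) {k : ℤ} (hk : k ≠ 0) (r r' : ℕ) :
    ∑ p ∈ pairSet M K σ k, w ^ crossExponent σ r r' p = 0 := by
  refine sum_eq_zero_of_resample (u := fun t p => resample (σ (pivot σ p + 1)) t p) _
    (fun p hp t => ?_) (fun p hp t t' => ?_) (fun p hp => ?_) (fun p hp => ?_) (fun p hp => ?_)
  all_goals obtain ⟨hne, hj, hgt⟩ := pivot_spec hσ.surjOn hk hp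
  · exact resample_mem_pairSet hσ hj hp (hgt _ (by omega) hj) t
  · simp only [pivot_resample hσ hk hp, resample_resample]
  · exact resample_injective (hσ.mapsTo hj) p
  · exact exists_resample_eq_self (hσ.mapsTo hj) (hgt _ (by omega) hj)
  · obtain ⟨B, hB⟩ := crossExponent_resample_pivot hσ hk hp r r'
    have hw0 : w ≠ 0 := hw.ne_zero (Fin.pos (p.1 ⟨0, by omega⟩)).ne'
    simp only [hB, zpow_add₀ hw0, ← mul_sum]
    rw [hw.sum_zpow_sub_mul_eq_zero (chain_lt hσ.mapsTo _ (by omega))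
      (chain_lt hσ.mapsTo _ (by omega)) (Ne.symm hne), mul_zero]

theorem sum_pairSet_zero_eq_zero {w : ℂ} (hw : IsPrimitiveRoot w M)
    (hσ : Set.MapsTo σ (Set.Iio K) (Set.Iio K)) (hK : 0 < K) {r r' : ℕ} (hr : r < M)
    (hr' : r' < M) (hrr' : r ≠ r') :
    ∑ p ∈ pairSet M K σ 0, w ^ crossExponent σ r r' p = 0 := by
  have hdiag : ∀ p ∈ pairSet M K σ 0, p = (p.1, p.1) := fun p hp => by
    simp only [pairSet, mem_filter, add_zero, Nat.cast_inj, Fin.val_inj,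
      finFunctionFinEquiv.apply_eq_iff_eq] at hp
    exact Prod.ext rfl hp.2.1
  have hmem : ∀ b : Fin K → Fin M, (b, b) ∈ pairSet M K σ 0 := fun b => by simp [pairSet]
  refine sum_eq_zero_of_resample (u := resample (σ 0)) _
    (fun p hp t => ?_) (fun p _ t t' => resample_resample _ _ _ p)
    (fun p _ => resample_injective (hσ hK) p) (fun p hp => ?_) (fun p hp => ?_)
  all_goals rw [hdiag p hp]
  · exact hmem _
  · exact exists_resample_eq_self (hσ hK) rfl
  · have hchain : ∀ t : Fin M, chain σ (setDigit p.1 (σ 0) t) 0 = t := fun t => by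
      rw [chain, dig_setDigit _ (hσ hK), if_pos rfl]
    simp only [crossExponent_eq, resample, hchain, sub_self, sum_const_zero, add_zero, ← sub_mul]
    exact hw.sum_zpow_sub_mul_eq_zero hr' hr hrr'.symm

/-- The sequence `x_s^{(r)}` of the statement. -/
def standardSeq (M K : ℕ) (σ : ℕ → ℕ) (w : ℂ) (r s : ℕ) (n : ℤ) : ℂ :=
  if 0 ≤ n ∧ n < (M ^ K : ℕ) then w ^ pathExponent K r s (fun i => dig M (σ i) n.toNat) else 0

theorem standardSeq_finFunctionFinEquiv (w : ℂ) (r s : ℕ) (b : Fin K → Fin M) :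
    standardSeq M K σ w r s (finFunctionFinEquiv b : ℕ) = w ^ pathExponent K r s (chain σ b) := by
  rw [standardSeq, if_pos ⟨by positivity, by exact_mod_cast (finFunctionFinEquiv b).isLt⟩,
    Int.toNat_natCast]
  rfl

theorem support_standardSeq_subset (w : ℂ) (r s : ℕ) :
    (standardSeq M K σ w r s).support ⊆
      Set.range fun b : Fin K → Fin M => ((finFunctionFinEquiv b : ℕ) : ℤ) := by
  intro n hn
  have hn' : 0 ≤ n ∧ n < (M ^ K : ℕ) := by
    by_contra h
    exact hn (if_neg h)
  exact ⟨finFunctionFinEquiv.symm ⟨n.toNat, by omega⟩, by simp; omega⟩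

theorem sum_finsum_conj_mul_shift {w : ℂ} (hM : 0 < M) (hw : IsPrimitiveRoot w M)
    (r r' : ℕ) (k : ℤ) :
    ∑ s : Fin M, ∑ᶠ n : ℤ, conj (standardSeq M K σ w r s n) * standardSeq M K σ w r' s (n + k) =
      M * ∑ p ∈ pairSet M K σ k, w ^ crossExponent σ r r' p := by
  have hw0 : w ≠ 0 := hw.ne_zero hM.ne'
  have hconj : ∀ m : ℕ, conj (w ^ m) = w ^ (-(m : ℤ)) := fun m => by
    rw [map_pow, ← Complex.inv_eq_conj (Complex.norm_eq_one_of_pow_eq_one hw.pow_eq_one hM.ne'),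
      zpow_neg, zpow_natCast, inv_pow]
  have hι : Injective fun b : Fin K → Fin M => ((finFunctionFinEquiv b : ℕ) : ℤ) :=
    Nat.cast_injective.comp (Fin.val_injective.comp finFunctionFinEquiv.injective)
  set shifted := univ.filter fun p : (Fin K → Fin M) × (Fin K → Fin M) =>
    ((finFunctionFinEquiv p.2 : ℕ) : ℤ) = (finFunctionFinEquiv p.1 : ℕ) + k
  calc _ = ∑ s : Fin M, ∑ p ∈ shifted, w ^ (crossExponent σ r r' p +
        ((chain σ p.2 (K - 1) : ℤ) - chain σ p.1 (K - 1)) * s) := by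
        refine sum_congr rfl fun s _ => ?_
        rw [finsum_mul_shift_eq_sum_filter hι (by simpa using support_standardSeq_subset w r s)
          (support_standardSeq_subset w r' s)]
        refine sum_congr rfl fun p _ => ?_
        rw [standardSeq_finFunctionFinEquiv, standardSeq_finFunctionFinEquiv, hconj,
          ← zpow_natCast, ← zpow_add₀ hw0]
        simp only [crossExponent, pathExponent]
        push_cast
        ring_nf
    _ = ∑ p ∈ shifted, if chain σ p.1 (K - 1) = chain σ p.2 (K - 1) then
        M * w ^ crossExponent σ r r' p else 0 := by
        rw [sum_comm]
        refine sum_congr rfl fun p _ => ?_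
        simp only [zpow_add₀ hw0, ← mul_sum]
        split_ifs with h
        · simp [h, mul_comm]
        · rw [hw.sum_zpow_sub_mul_eq_zero (a := chain σ p.2 (K - 1)) (b := chain σ p.1 (K - 1))
            (Nat.mod_lt _ hM) (Nat.mod_lt _ hM) (Ne.symm h), mul_zero]
    _ = _ := by rw [mul_sum, ← sum_filter, pairSet, filter_filter]

end StandardSet

theorem dft_standard_sets_form_CCC_general
    (M K : ℕ) (hK : 1 ≤ K)
    (w : ℂ) (hw : w = Complex.exp (2 * Real.pi * Complex.I / M))
    (σ : ℕ → ℕ) (hσ : Set.BijOn σ (Set.Iio K) (Set.Iio K))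
    (μ : Fin M → Fin M → ℕ → ℕ)
    (hμ : ∀ r s : Fin M, ∀ n : ℕ,
      μ r s n = (r : ℕ) * dig M (σ 0) n +
        (∑ k ∈ Finset.Ico 1 K, dig M (σ (k - 1)) n * dig M (σ k) n) +
        dig M (σ (K - 1)) n * (s : ℕ))
    (x : Fin M → Fin M → ℤ → ℂ)
    (hx : ∀ r s : Fin M, ∀ n : ℤ,
      x r s n = if 0 ≤ n ∧ n < (M ^ K : ℕ) then w ^ (μ r s n.toNat) else 0) :
    (∀ r : Fin M, ∀ k : ℤ, k ≠ 0 →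
      ∑ s : Fin M, ∑ᶠ n : ℤ, x r s n * (starRingEnd ℂ) (x r s (n + k)) = 0) ∧
    (∀ r r' : Fin M, r ≠ r' → ∀ k : ℤ,
      ∑ s : Fin M, ∑ᶠ n : ℤ, (starRingEnd ℂ) (x r s n) * x r' s (n + k) = 0) := by
  have hx' : x = fun r s : Fin M => StandardSet.standardSeq M K σ w r s := by
    funext r s n
    rw [hx, hμ]
    rfl
  subst hx'
  have key : ∀ r r' : Fin M, ∀ k : ℤ, r ≠ r' ∨ k ≠ 0 → ∑ s : Fin M,
      ∑ᶠ n : ℤ, conj (StandardSet.standardSeq M K σ w r s n) *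
        StandardSet.standardSeq M K σ w r' s (n + k) = 0 := by
    intro r r' k h
    have hM : 0 < M := r.pos
    have hprim : IsPrimitiveRoot w M := hw ▸ Complex.isPrimitiveRoot_exp M hM.ne'
    rw [StandardSet.sum_finsum_conj_mul_shift hM hprim, mul_eq_zero]
    right
    rcases eq_or_ne k 0 with rfl | hk
    · exact StandardSet.sum_pairSet_zero_eq_zero hprim hσ.mapsTo hK r.isLt r'.isLt
        (Fin.val_injective.ne (h.resolve_right (by simp)))
    · exact StandardSet.sum_pairSet_eq_zero hprim hσ hk r r'
  refine ⟨fun r k hk => ?_, fun r r' h k => key r r' k (.inl h)⟩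
  rw [← key r r (-k) (.inr (neg_ne_zero.2 hk))]
  refine sum_congr rfl fun s _ => ?_
  conv_rhs => rw [← finsum_comp_equiv (Equiv.addRight k)]
  simp [mul_comm]

/-- The DFT-based polyphase standard sequences
`x_s^{(r)}(n) = w^{μ_{r,s}(n)}` with
`μ_{r,s}(n) = r·d_{σ(0)}(n) + ∑_{k=1}^{K-1} d_{σ(k-1)}(n)·d_{σ(k)}(n) + d_{σ(K-1)}(n)·s`
form a complete complementary code: each of the `M` sets (indexed by `r`) is a
complementary set, and distinct sets are mutually orthogonal. -/
theorem dft_standard_sets_form_CCC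
    (M K : ℕ) (hM : 2 ≤ M) (hK : 1 ≤ K)
    (w : ℂ) (hw : w = Complex.exp (2 * Real.pi * Complex.I / M))
    (σ : ℕ → ℕ) (hσ : Set.BijOn σ (Set.Iio K) (Set.Iio K))
    (μ : Fin M → Fin M → ℕ → ℕ)
    (hμ : ∀ r s : Fin M, ∀ n : ℕ,
      μ r s n = (r : ℕ) * dig M (σ 0) n +
        (∑ k ∈ Finset.Ico 1 K, dig M (σ (k - 1)) n * dig M (σ k) n) +
        dig M (σ (K - 1)) n * (s : ℕ))
    (x : Fin M → Fin M → ℤ → ℂ)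
    (hx : ∀ r s : Fin M, ∀ n : ℤ,
      x r s n = if 0 ≤ n ∧ n < (M ^ K : ℕ) then w ^ (μ r s n.toNat) else 0) :
    (∀ r : Fin M, ∀ k : ℤ, k ≠ 0 →
      ∑ s : Fin M, ∑ᶠ n : ℤ, x r s n * (starRingEnd ℂ) (x r s (n + k)) = 0) ∧
    (∀ r r' : Fin M, r ≠ r' → ∀ k : ℤ,
      ∑ s : Fin M, ∑ᶠ n : ℤ, (starRingEnd ℂ) (x r s n) * x r' s (n + k) = 0) :=
  dft_standard_sets_form_CCC_general M K hK w hw σ hσ μ hμ x hx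
end
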